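/- Let G be an ancestral graph, let X and Y be disjoint node sets, and let Z be an m-separator relative to (X,Y). If the set Z ∪ {Z₁, …, Zₙ} is also an m-separator relative to (X,Y), where Z₁, …, Zₙ are distinct nodes not in Z (and not in X ∪ Y), then for some i ∈ {1,…,n} the set Z ∪ {Zᵢ} is an m-separator relative to (X,Y). -/

import Mathlib

/-!
Common definitions: mixed graphs, walks, colliders, m-separation,
ancestral graphs, DAGs, MAGs, proper causal paths, adjustment criteria,
inducing paths, and MAG marginalization.
-/

universe u

/-- The four possible kinds of edges of a mixed graph, oriented along the
direction of traversal: `u → v`, `u ← v`, `u ↔ v`, `u − v`. -/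
inductive EType where
  | right : EType
  | left : EType
  | both : EType
  | undirEdge : EType
deriving DecidableEq

namespace EType

/-- The edge has an arrowhead at its first endpoint. -/
def headFst : EType → Prop
  | .left => True
  | .both => True
  | _ => False

/-- The edge has an arrowhead at its second endpoint. -/
def headSnd : EType → Prop
  | .right => True
  | .both => True
  | _ => False

end EType

/-- A mixed graph with directed, bidirected and undirected edges. -/
structure MixedGraph (V : Type u) where
  dir : V → V → Prop
  bi : V → V → Prop
  undir : V → V → Prop
  bi_symm : ∀ u v, bi u v → bi v u
  undir_symm : ∀ u v, undir u v → undir v u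

namespace MixedGraph

variable {V : Type u}

/-- `G.IsEdge e u v` holds if the graph contains the edge `e` from `u` to `v`
(read in the direction of traversal). -/
def IsEdge (G : MixedGraph V) : EType → V → V → Prop
  | .right, u, v => G.dir u v
  | .left, u, v => G.dir v u
  | .both, u, v => G.bi u v
  | .undirEdge, u, v => G.undir u v

/-- Walks in a mixed graph, remembering the type of every traversed edge. -/
inductive Walk (G : MixedGraph V) : V → V → Type u
  | nil (v : V) : Walk G v v
  | cons (u v w : V) (e : EType) (h : G.IsEdge e u v) (p : Walk G v w) : Walk G u w

namespace Walk

variable {G : MixedGraph V}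

/-- The list of nodes visited by a walk (with multiplicity). -/
def support : {a b : V} → G.Walk a b → List V
  | _, _, .nil v => [v]
  | _, _, .cons u _ _ _ _ p => u :: p.support

/-- A path is a walk without repeated nodes. -/
def IsPath {a b : V} (p : G.Walk a b) : Prop := p.support.Nodup

/-- Auxiliary m-connectivity check: `ph` records whether the previous edge of
the walk has an arrowhead at the current start node.  At every interior node,
the node must be a collider (two arrowheads meet) iff it belongs to `Z`. -/
def connFrom (Z : Set V) : Prop → {a b : V} → G.Walk a b → Prop
  | _, _, _, .nil _ => True
  | ph, _, _, .cons u _ _ e _ p =>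
      ((ph ∧ e.headFst) ↔ u ∈ Z) ∧ p.connFrom Z e.headSnd

/-- The walk m-connects its endpoints given `Z`: all colliders and only
colliders on it are in `Z`. -/
def ConnBy (Z : Set V) : {a b : V} → G.Walk a b → Prop
  | _, _, .nil _ => True
  | _, _, .cons _ _ _ e _ p => p.connFrom Z e.headSnd

/-- A causal (directed) walk: every edge points towards the end node. -/
def IsCausal : {a b : V} → G.Walk a b → Prop
  | _, _, .nil _ => True
  | _, _, .cons _ _ _ e _ p => e = EType.right ∧ p.IsCausal

/-- A walk is proper w.r.t. `X` if only its start node may belong to `X`. -/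
def ProperFrom (X : Set V) : {a b : V} → G.Walk a b → Prop
  | _, _, .nil _ => True
  | _, _, .cons _ _ _ _ _ p => ∀ n ∈ p.support, n ∉ X

/-- Concatenation of walks. -/
def append : {a b c : V} → G.Walk a b → G.Walk b c → G.Walk a c
  | _, _, _, .nil _, q => q
  | _, _, _, .cons u v _ e h p, q => .cons u v _ e h (p.append q)

/-- The walk is nonempty and its first edge has an arrowhead at the start
node. -/
def headAtStart : {a b : V} → G.Walk a b → Prop
  | _, _, .nil _ => False
  | _, _, .cons _ _ _ e _ _ => e.headFst

/-- The walk is nonempty and its last edge has an arrowhead at the end node. -/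
def headAtEnd : {a b : V} → G.Walk a b → Prop
  | _, _, .nil _ => False
  | _, _, .cons _ _ _ e _ (.nil _) => e.headSnd
  | _, _, .cons _ _ _ _ _ p => p.headAtEnd

/-- `P` holds of every (ordered) pair of consecutive nodes of the walk. -/
def edgeProp (P : V → V → Prop) : {a b : V} → G.Walk a b → Prop
  | _, _, .nil _ => True
  | _, _, .cons u v _ _ _ p => P u v ∧ p.edgeProp P

end Walk

/-- `x` and `y` are m-connected given `Z`: there is a walk between them on
which all colliders and only colliders are in `Z`. -/
def MConn (G : MixedGraph V) (Z : Set V) (x y : V) : Prop :=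
  ∃ p : G.Walk x y, p.ConnBy Z

/-- `Z` m-separates the node sets `X` and `Y`. -/
def MSep (G : MixedGraph V) (X Y Z : Set V) : Prop :=
  ∀ x ∈ X, ∀ y ∈ Y, ¬ G.MConn Z x y

/-- `Z` is an m-separator relative to `(X, Y)`: it is disjoint from `X ∪ Y`
and m-separates `X` and `Y`. -/
def IsMSep (G : MixedGraph V) (X Y Z : Set V) : Prop :=
  Disjoint Z (X ∪ Y) ∧ G.MSep X Y Z

/-- An `M`-minimal m-separator relative to `(X, Y)`. -/
def IsMinMSep (G : MixedGraph V) (X Y M Z : Set V) : Prop :=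
  G.IsMSep X Y Z ∧ M ⊆ Z ∧ ∀ Z', Z' ⊂ Z → M ⊆ Z' → ¬ G.IsMSep X Y Z'

/-- One step of the anterior relation: a directed or undirected edge. -/
def antEdge (G : MixedGraph V) (u v : V) : Prop := G.dir u v ∨ G.undir u v

/-- `u` is an anterior of `v` (every node is its own anterior). -/
def Anterior (G : MixedGraph V) (u v : V) : Prop :=
  Relation.ReflTransGen G.antEdge u v

/-- The set of anteriors of nodes of `W`. -/
def Ant (G : MixedGraph V) (W : Set V) : Set V := {u | ∃ w ∈ W, G.Anterior u w}

/-- `v` is a descendant of `u`, i.e. there is a directed path `u → ⋯ → v`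
(every node is its own descendant/ancestor). -/
def Anc (G : MixedGraph V) (u v : V) : Prop := Relation.ReflTransGen G.dir u v

/-- The set of descendants of nodes of `W`. -/
def De (G : MixedGraph V) (W : Set V) : Set V := {v | ∃ w ∈ W, G.Anc w v}

/-- The set of ancestors of nodes of `W`. -/
def AnSet (G : MixedGraph V) (W : Set V) : Set V := {v | ∃ w ∈ W, G.Anc v w}

/-- An ancestral graph: (1) for each edge `a ← b` or `a ↔ b`, `a` is not an
anterior of `b`; (2) for each edge `a − b` there is no edge `a ← c`, `a ↔ c`,
`b ← c` or `b ↔ c`. -/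
def IsAG (G : MixedGraph V) : Prop :=
  (∀ a b, G.dir b a ∨ G.bi a b → ¬ G.Anterior a b) ∧
  (∀ a b, G.undir a b →
    ∀ c, ¬ G.dir c a ∧ ¬ G.bi a c ∧ ¬ G.dir c b ∧ ¬ G.bi b c)

/-- A DAG: only directed edges, and no directed cycles. -/
def IsDAG (G : MixedGraph V) : Prop :=
  (∀ u v, ¬ G.bi u v) ∧ (∀ u v, ¬ G.undir u v) ∧
  (∀ v, ¬ Relation.TransGen G.dir v v)

/-- Two nodes are adjacent if they are joined by some edge. -/
def Adjacent (G : MixedGraph V) (u v : V) : Prop :=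
  G.dir u v ∨ G.dir v u ∨ G.bi u v ∨ G.undir u v

/-- A maximal ancestral graph (MAG): only directed and bidirected edges, no
directed cycle, no almost-directed cycle, and every pair of non-adjacent
nodes can be m-separated by some set of the remaining nodes. -/
def IsMAG (G : MixedGraph V) : Prop :=
  (∀ u v, ¬ G.undir u v) ∧
  (∀ v, ¬ Relation.TransGen G.dir v v) ∧
  (∀ u v, G.bi u v → ¬ Relation.TransGen G.dir v u) ∧
  (∀ u v, u ≠ v → ¬ G.Adjacent u v →
    ∃ Z : Set V, u ∉ Z ∧ v ∉ Z ∧ ¬ G.MConn Z u v)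

/-- `PCP G X Y`: the set of nodes, excluding nodes of `X`, that lie on a
proper causal path from `X` to `Y`. -/
def PCP (G : MixedGraph V) (X Y : Set V) : Set V :=
  {w | w ∉ X ∧ ∃ x ∈ X, ∃ y ∈ Y, ∃ p : G.Walk x y,
    p.IsPath ∧ p.IsCausal ∧ p.ProperFrom X ∧ w ∈ p.support}

/-- `Dpcp G X Y`: the descendants of nodes on proper causal paths. -/
def Dpcp (G : MixedGraph V) (X Y : Set V) : Set V := G.De (G.PCP X Y)

/-- Remove from `G` all edges into `A` and all edges out of `B`. -/
def rmInOut (G : MixedGraph V) (A B : Set V) : MixedGraph V where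
  dir u v := G.dir u v ∧ v ∉ A ∧ u ∉ B
  bi u v := G.bi u v ∧ u ∉ A ∧ v ∉ A
  undir u v := G.undir u v ∧ u ∉ B ∧ v ∉ B
  bi_symm := fun u v h => ⟨G.bi_symm u v h.1, h.2.2, h.2.1⟩
  undir_symm := fun u v h => ⟨G.undir_symm u v h.1, h.2.2, h.2.1⟩

/-- The parametrized proper back-door graph: remove every edge `x → d` with
`x ∈ X` and `d ∈ PCP(X,Y) ∪ C`. -/
def pbdC (G : MixedGraph V) (X Y C : Set V) : MixedGraph V where
  dir u v := G.dir u v ∧ ¬(u ∈ X ∧ v ∈ G.PCP X Y ∪ C)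
  bi := G.bi
  undir := G.undir
  bi_symm := G.bi_symm
  undir_symm := G.undir_symm

/-- The proper back-door graph. -/
def pbd (G : MixedGraph V) (X Y : Set V) : MixedGraph V := G.pbdC X Y ∅

/-- The adjustment criterion (AC) in a DAG: (a) no element of `Z` is a
descendant in `G_{X̄}` of a node outside `X` lying on a proper causal path
from `X` to `Y`; (b) every proper non-causal path from `X` to `Y` is blocked
by `Z`. -/
def SatisfiesACdag (G : MixedGraph V) (X Y Z : Set V) : Prop :=
  (∀ z ∈ Z, z ∉ (G.rmInOut X ∅).De (G.PCP X Y)) ∧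
  (∀ x ∈ X, ∀ y ∈ Y, ∀ p : G.Walk x y,
    p.IsPath → p.ProperFrom X → ¬ p.IsCausal → ¬ p.ConnBy Z)

/-- The adjustment criterion (AC) in a MAG: (a) no element of `Z` is a
descendant in `M` of a node outside `X` lying on a proper causal path from
`X` to `Y`; (b) every proper non-causal path from `X` to `Y` is blocked by
`Z`. -/
def SatisfiesACmag (G : MixedGraph V) (X Y Z : Set V) : Prop :=
  (∀ z ∈ Z, z ∉ G.Dpcp X Y) ∧
  (∀ x ∈ X, ∀ y ∈ Y, ∀ p : G.Walk x y,
    p.IsPath → p.ProperFrom X → ¬ p.IsCausal → ¬ p.ConnBy Z)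

/-- The constructive back-door criterion (CBC): (a) `Z` avoids
`Dpcp(X,Y)`; (b) `Z` m-separates `X` and `Y` in the proper back-door
graph. -/
def SatisfiesCBC (G : MixedGraph V) (X Y Z : Set V) : Prop :=
  (∀ z ∈ Z, z ∉ G.Dpcp X Y) ∧ (G.pbd X Y).MSep X Y Z

/-- The parametrized constructive back-door criterion CBC(A,B,C). -/
def SatisfiesCBCP (G : MixedGraph V) (X Y Z A B C : Set V) : Prop :=
  (∀ z ∈ Z, z ∉ (G.rmInOut A B).De (G.PCP X Y)) ∧ (G.pbdC X Y C).MSep X Y Z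

namespace Walk

variable {G : MixedGraph V}

/-- Auxiliary check for inducing paths: every interior non-collider is in
`L`, and every interior collider is an ancestor of a node of `T`.  `ph`
records whether the previous edge has an arrowhead at the current node. -/
def indFrom (L T : Set V) : Prop → {a b : V} → G.Walk a b → Prop
  | _, _, _, .nil _ => True
  | ph, _, _, .cons u _ _ e _ p =>
      ((ph ∧ e.headFst) → ∃ t ∈ T, Relation.ReflTransGen G.dir u t) ∧
      (¬(ph ∧ e.headFst) → u ∈ L) ∧ p.indFrom L T e.headSnd

/-- Interior conditions for inducing paths (endpoints are exempt). -/
def indBody (L T : Set V) : {a b : V} → G.Walk a b → Prop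
  | _, _, .nil _ => True
  | _, _, .cons _ _ _ e _ p => p.indFrom L T e.headSnd

end Walk

/-- `p` is an inducing path with respect to `Z` and `L`: a path on which
every non-collider other than the endpoints is in `L` and every collider is
an ancestor of the endpoints or of `Z`. -/
def IsInducing (G : MixedGraph V) (Z L : Set V) {a b : V} (p : G.Walk a b) : Prop :=
  p.IsPath ∧ p.indBody L ({a, b} ∪ Z)

/-- Adjacency in the MAG `G[∅_L`: `u, v ∉ L` are adjacent iff they cannot be
d-separated in `G` by any set `W ⊆ V∖L` (not containing `u, v`). -/
def magAdj (G : MixedGraph V) (L : Set V) (u v : V) : Prop :=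
  u ∉ L ∧ v ∉ L ∧ u ≠ v ∧
  ∀ W : Set V, Disjoint W L → u ∉ W → v ∉ W → (G.MConn W u v ∧ G.MConn W v u)

/-- The MAG `G[∅_L` obtained from the DAG `G` by marginalizing `L`: adjacent
`u, v` are joined by `u → v` if `u` is an ancestor of `v` in `G` and `v` is
not an ancestor of `u`, and by `u ↔ v` if neither is an ancestor of the
other. -/
def mag (G : MixedGraph V) (L : Set V) : MixedGraph V where
  dir u v := G.magAdj L u v ∧ G.Anc u v ∧ ¬ G.Anc v u
  bi u v := G.magAdj L u v ∧ ¬ G.Anc u v ∧ ¬ G.Anc v u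
  undir _ _ := False
  bi_symm := fun u v h =>
    ⟨⟨h.1.2.1, h.1.1, h.1.2.2.1.symm,
      fun W hW hv hu => ⟨(h.1.2.2.2 W hW hu hv).2, (h.1.2.2.2 W hW hu hv).1⟩⟩,
      h.2.2, h.2.1⟩
  undir_symm := fun _ _ h => h.elim

/-- An inducing `Z`-trail in the MAG `G[∅_L`: a path whose interior nodes are
exactly the `Z`-nodes on it, each consecutive pair being linked in `G` by an
inducing path w.r.t. `∅, L` which has arrowheads at the interior nodes. -/
def IsInducingZTrail (G : MixedGraph V) (Z L : Set V) {a b : V}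
    (p : (G.mag L).Walk a b) : Prop :=
  p.IsPath ∧ a ∉ Z ∧ b ∉ Z ∧
  (∀ v ∈ p.support, v ≠ a → v ≠ b → v ∈ Z) ∧
  p.edgeProp (fun u v => ∃ q : G.Walk u v, G.IsInducing ∅ L q ∧
    (u ∈ Z → q.headAtStart) ∧ (v ∈ Z → q.headAtEnd))

end MixedGraph

open MixedGraph

variable {V : Type u}

/-!
Suppose every `Z ∪ {Zᵢ}` fails and let `πᵢ` be a walk from `X` to `Y` that is connecting
given `Z ∪ {Zᵢ}`. Then `Zᵢ` is a collider on `πᵢ`, so it carries an arrowhead, and `Zᵢ` is not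
an anterior of `X ∪ Y ∪ Z`, for otherwise `πᵢ` could be rerouted into a walk connecting given
`Z`. As `Z ∪ {Z₁, …, Zₙ}` separates, some `Zⱼ ≠ Zᵢ` is a non-collider of `πᵢ`; non-colliders of
connecting walks are anteriors of colliders or endpoints, so `Zⱼ` is a strict anterior of `Zᵢ`.
Iterating yields a cycle of strict anteriors through nodes with arrowheads, which ancestral
graphs forbid.
-/

theorem Finite.exists_rel_self_of_forall_exists_rel {α : Type*} [Finite α] [Nonempty α]
    (r : α → α → Prop) (htrans : ∀ a b c, r a b → r b c → r a c) (h : ∀ a, ∃ b, r b a) :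
    ∃ a, r a a := by
  by_contra! hirr
  have : IsTrans α r := ⟨htrans⟩
  have : Std.Irrefl r := ⟨hirr⟩
  obtain ⟨a, -, hmin⟩ :=
    (Finite.wellFounded_of_trans_of_irrefl r).has_min Set.univ Set.univ_nonempty
  obtain ⟨b, hba⟩ := h a
  exact hmin b trivial hba

namespace MixedGraph

variable {G : MixedGraph V}

def HasHeadAt (G : MixedGraph V) (w : V) : Prop := ∃ c, G.dir c w ∨ G.bi w c

def dirAvoiding (G : MixedGraph V) (W : Set V) (a b : V) : Prop := G.dir a b ∧ a ∉ W

section Edges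

variable {e : EType} {u v : V}

lemma IsEdge.hasHeadAt_fst (he : G.IsEdge e u v) (h : e.headFst) : G.HasHeadAt u := by
  cases e with
  | left => exact ⟨v, Or.inl he⟩
  | both => exact ⟨v, Or.inr he⟩
  | right | undirEdge => exact (h : False).elim

lemma IsEdge.antEdge (he : G.IsEdge e u v) (h : ¬ e.headFst) : G.antEdge u v := by
  cases e with
  | right => exact Or.inl he
  | undirEdge => exact Or.inr he
  | left | both => exact (h trivial).elim

lemma IsEdge.antEdge_rev (he : G.IsEdge e u v) (h : ¬ e.headSnd) : G.antEdge v u := by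
  cases e with
  | left => exact Or.inl he
  | undirEdge => exact Or.inr (G.undir_symm _ _ he)
  | right | both => exact (h trivial).elim

lemma IsEdge.undir (he : G.IsEdge e u v) (h₁ : ¬ e.headFst) (h₂ : ¬ e.headSnd) :
    G.undir u v := by
  cases e with
  | undirEdge => exact he
  | left | both => exact (h₁ trivial).elim
  | right => exact (h₂ trivial).elim

end Edges

namespace IsAG

variable (hAG : G.IsAG)
include hAG

lemma not_hasHeadAt_of_undir {a b : V} (hab : G.undir a b) : ¬ G.HasHeadAt a := by
  rintro ⟨c, hc | hc⟩
  exacts [(hAG.2 a b hab c).1 hc, (hAG.2 a b hab c).2.1 hc]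

lemma anc_of_anterior {v t : V} (hv : G.HasHeadAt v) (hvt : G.Anterior v t) : G.Anc v t := by
  induction hvt using Relation.ReflTransGen.head_induction_on with
  | refl => exact .refl
  | head hac _ ih =>
    rcases hac with hac | hac
    · exact .head hac (ih ⟨_, Or.inl hac⟩)
    · exact absurd hv (hAG.not_hasHeadAt_of_undir hac)

lemma not_anterior_of_anterior {a b : V} (hb : G.HasHeadAt b) (hab : G.Anterior a b)
    (hne : a ≠ b) : ¬ G.Anterior b a := by
  rcases Relation.ReflTransGen.cases_tail hab with rfl | ⟨c, hac, hcb | hcb⟩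
  · exact absurd rfl hne
  · exact fun hba => hAG.1 b c (Or.inl hcb) (hba.trans hac)
  · exact absurd hb (hAG.not_hasHeadAt_of_undir (G.undir_symm _ _ hcb))

end IsAG

lemma exists_dirAvoiding_of_anc {W : Set V} {v t : V} (hvt : G.Anc v t) (ht : t ∈ W) :
    ∃ t' ∈ W, Relation.ReflTransGen (G.dirAvoiding W) v t' := by
  induction hvt using Relation.ReflTransGen.head_induction_on with
  | refl => exact ⟨t, ht, .refl⟩
  | @head a c hac _ ih =>
    by_cases ha : a ∈ W
    · exact ⟨a, ha, .refl⟩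
    · obtain ⟨t', ht', hchain⟩ := ih
      exact ⟨t', ht', .head ⟨hac, ha⟩ hchain⟩

namespace Walk

/-- Whether the walk ends with an arrowhead at its last node; `ph` if the walk is empty. -/
def lastHead : {a b : V} → G.Walk a b → Prop → Prop
  | _, _, .nil _, ph => ph
  | _, _, .cons _ _ _ e _ p, _ => p.lastHead e.headSnd

/-- The nodes at which the walk, entered with an arrowhead iff `ph`, does not form a
collider (the last node excluded). -/
def nonCollidersFrom : Prop → {a b : V} → G.Walk a b → Set V
  | _, _, _, .nil _ => ∅
  | ph, _, _, .cons u _ _ e _ p =>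
      {x | x = u ∧ ¬ (ph ∧ e.headFst)} ∪ p.nonCollidersFrom e.headSnd

variable {Z : Set V}

lemma connFrom_append :
    ∀ {a b c : V} (p : G.Walk a b) (q : G.Walk b c) (ph : Prop),
      (p.append q).connFrom Z ph ↔ p.connFrom Z ph ∧ q.connFrom Z (p.lastHead ph)
  | _, _, _, .nil _, q, ph => by simp [append, connFrom, lastHead]
  | _, _, _, .cons u v w e h p, q, ph => by
      simp only [append, connFrom, lastHead, connFrom_append p q e.headSnd]
      tauto

lemma lastHead_append {a b c : V} (p : G.Walk a b) (q : G.Walk b c) (ph : Prop) :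
    (p.append q).lastHead ph = q.lastHead (p.lastHead ph) := by
  induction p generalizing ph with
  | nil => rfl
  | cons u v w e h p ih => exact ih q e.headSnd

lemma append_assoc :
    ∀ {a b c d : V} (p : G.Walk a b) (q : G.Walk b c) (r : G.Walk c d),
      (p.append q).append r = p.append (q.append r)
  | _, _, _, _, .nil _, _, _ => rfl
  | _, _, _, _, .cons u v w e h p, q, r => by simp [append, append_assoc p q r]

lemma connBy_of_connFrom {a b : V} {ph : Prop} {p : G.Walk a b} (hp : p.connFrom Z ph) :
    p.ConnBy Z := by
  cases p with
  | nil => trivial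
  | cons => exact hp.2

lemma notMem_of_mem_nonCollidersFrom {a b : V} (p : G.Walk a b) {ph : Prop}
    (hp : p.connFrom Z ph) {x : V} (hx : x ∈ p.nonCollidersFrom ph) : x ∉ Z := by
  induction p generalizing ph with
  | nil => exact hx.elim
  | cons u v w e he p ih =>
    rcases hx with ⟨rfl, hx⟩ | hx
    · exact fun hxZ => hx (hp.1.mpr hxZ)
    · exact ih hp.2 hx

lemma connFrom_union {R : Set V} {a b : V} (p : G.Walk a b) {ph : Prop}
    (hp : p.connFrom Z ph) (hR : ∀ x ∈ p.nonCollidersFrom ph, x ∉ R) :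
    p.connFrom (Z ∪ R) ph := by
  induction p generalizing ph with
  | nil => trivial
  | cons u v w e he p ih =>
    refine ⟨⟨fun hcol => Or.inl (hp.1.mp hcol), ?_⟩, ih hp.2 fun x hx => hR x (Or.inr hx)⟩
    rintro (huZ | huR)
    · exact hp.1.mpr huZ
    · by_contra hcol
      exact hR u (Or.inl ⟨rfl, hcol⟩) huR

lemma connFrom_union_singleton_elim {v : V} {a b : V} (p : G.Walk a b) {ph : Prop}
    (hp : p.connFrom (Z ∪ {v}) ph) : p.connFrom Z ph ∨ G.HasHeadAt v := by
  induction p generalizing ph with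
  | nil => exact Or.inl trivial
  | cons u u' w e he p ih =>
    obtain ⟨hiff, hp⟩ := hp
    refine (ih hp).elim (fun hq => ?_) Or.inr
    by_cases huv : u = v
    · subst huv
      exact Or.inr (he.hasHeadAt_fst (hiff.mpr (Or.inr rfl)).2)
    · exact Or.inl ⟨hiff.trans (by simp [huv]), hq⟩

/-- A `Z`-connecting closed walk at `v ∉ Z` that leaves and re-enters `v` by tails can be
spliced in at every occurrence of `v`. -/
lemma exists_connFrom_splice_cycle {v : V} (hv : v ∉ Z) (d : G.Walk v v)
    (hd : ∀ ph, d.connFrom Z ph) (hdl : ∀ ph, ¬ d.lastHead ph) {a b : V} (p : G.Walk a b)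
    {ph : Prop} (hp : p.connFrom (Z ∪ {v}) ph) : ∃ q : G.Walk a b, q.connFrom Z ph := by
  induction p generalizing ph with
  | nil c => exact ⟨.nil c, trivial⟩
  | cons u u' w e he p ih =>
    obtain ⟨hiff, hp⟩ := hp
    obtain ⟨q, hq⟩ := ih hp
    by_cases huv : u = v
    · subst huv
      refine ⟨d.append (.cons u u' w e he q), ?_⟩
      rw [connFrom_append]
      exact ⟨hd ph, iff_of_false (fun h => hdl ph h.1) hv, hq⟩
    · exact ⟨.cons u u' w e he q, hiff.trans (by simp [huv]), hq⟩

lemma exists_connFrom_or_reroute_end {v t : V} (q₀ : G.Walk v t)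
    (hq₀ : ∀ ph, q₀.connFrom Z ph) {a b : V} (p : G.Walk a b) {ph : Prop}
    (hp : p.connFrom (Z ∪ {v}) ph) :
    (∃ q : G.Walk a b, q.connFrom Z ph) ∨ ∃ q : G.Walk a t, q.connFrom Z ph := by
  induction p generalizing ph with
  | nil c => exact Or.inl ⟨.nil c, trivial⟩
  | cons u u' w e he p ih =>
    obtain ⟨hiff, hp⟩ := hp
    by_cases huv : u = v
    · subst huv
      exact Or.inr ⟨q₀, hq₀ ph⟩
    · have hiff' : (ph ∧ e.headFst) ↔ u ∈ Z := hiff.trans (by simp [huv])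
      exact (ih hp).imp (fun ⟨q, hq⟩ => ⟨.cons u u' w e he q, hiff', hq⟩)
        (fun ⟨q, hq⟩ => ⟨.cons u u' t e he q, hiff', hq⟩)

lemma exists_connFrom_or_reroute_start {v t : V} (hv : v ∉ Z) (r : G.Walk t v)
    (hr : ∀ {b : V} (s : G.Walk v b), s.connFrom Z False → (r.append s).ConnBy Z)
    {a b : V} (p : G.Walk a b) {ph : Prop} (hp : p.connFrom (Z ∪ {v}) ph) :
    (∃ q : G.Walk a b, q.connFrom Z ph) ∨ ∃ q : G.Walk t b, q.ConnBy Z := by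
  induction p generalizing ph with
  | nil c => exact Or.inl ⟨.nil c, trivial⟩
  | cons u u' w e he p ih =>
    obtain ⟨hiff, hp⟩ := hp
    refine (ih hp).elim (fun ⟨q, hq⟩ => ?_) Or.inr
    by_cases huv : u = v
    · subst huv
      exact Or.inr ⟨r.append (.cons u u' w e he q), hr _ ⟨iff_of_false (·.1) hv, hq⟩⟩
    · exact Or.inl ⟨.cons u u' w e he q, hiff.trans (by simp [huv]), hq⟩

end Walk

open Walk

section Chains

variable {Z : Set V} {v t : V}

lemma exists_walk_connFrom_of_dirAvoiding
    (h : Relation.ReflTransGen (G.dirAvoiding Z) v t) :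
    ∃ q : G.Walk v t, ∀ ph, q.connFrom Z ph := by
  induction h using Relation.ReflTransGen.head_induction_on with
  | refl => exact ⟨.nil t, fun _ => trivial⟩
  | @head a c hac _ ih =>
    obtain ⟨q, hq⟩ := ih
    exact ⟨.cons a c t .right hac.1 q, fun ph => ⟨iff_of_false (·.2) hac.2, hq _⟩⟩

/-- The directed chain `v → ⋯ → t` read backwards, `t ← ⋯ ← v`, can be put in front of any
walk that leaves `v` by a tail. -/
lemma exists_walk_append_connBy_of_dirAvoiding
    (h : Relation.ReflTransGen (G.dirAvoiding Z) v t) :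
    ∃ r : G.Walk t v, ∀ {b : V} (s : G.Walk v b), s.connFrom Z False →
      (r.append s).ConnBy Z := by
  induction h using Relation.ReflTransGen.head_induction_on with
  | refl => exact ⟨.nil t, fun _ hs => connBy_of_connFrom hs⟩
  | @head a c hac hct ih =>
    obtain ⟨r, hr⟩ := ih
    rcases hct.cases_head with rfl | ⟨d, hcd, -⟩
    · exact ⟨.cons c a a .left hac.1 (.nil a), fun _ hs => hs⟩
    · refine ⟨r.append (.cons c a a .left hac.1 (.nil a)), fun s hs => ?_⟩
      rw [append_assoc]
      exact hr (.cons c a _ .left hac.1 s) ⟨iff_of_false (·.1) hcd.2, hs⟩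

/-- The closed walk `v → ⋯ → t ← ⋯ ← v`, whose only collider `t` lies in `Z`. -/
lemma exists_cycle_connFrom_of_dirAvoiding
    (h : Relation.ReflTransGen (G.dirAvoiding Z) v t) (ht : t ∈ Z) (hv : v ∉ Z) :
    ∃ d : G.Walk v v, (∀ ph, d.connFrom Z ph) ∧ ∀ ph, ¬ d.lastHead ph := by
  induction h using Relation.ReflTransGen.head_induction_on with
  | refl => exact absurd ht hv
  | @head a c hac _ ih =>
    let back : G.Walk c a := .cons c a a .left hac.1 (.nil a)
    have hback : ∀ ph, ¬ back.lastHead ph := fun _ h => h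
    by_cases hc : c ∈ Z
    · refine ⟨.cons a c a .right hac.1 back, fun ph => ?_, fun _ => hback True⟩
      exact ⟨iff_of_false (·.2) hac.2, iff_of_true ⟨trivial, trivial⟩ hc, trivial⟩
    · obtain ⟨d, hd, hdl⟩ := ih hc
      refine ⟨.cons a c a .right hac.1 (d.append back), fun ph => ?_, fun ph => ?_⟩
      · refine ⟨iff_of_false (·.2) hac.2, ?_⟩
        rw [connFrom_append]
        exact ⟨hd _, iff_of_false (fun h => hdl _ h.1) hc, trivial⟩
      · show ¬ (d.append back).lastHead _
        rw [lastHead_append]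
        exact hback _

end Chains

namespace IsAG

variable (hAG : G.IsAG)
include hAG

/-- A walk that leaves `u` by a tail and is `S`-connecting from there on follows an anterior
path from `u` to its first collider or to its end. -/
lemma exists_anterior_of_tail {S T : Set V} (hST : S ⊆ T) {u v b : V} {e : EType}
    (he : G.IsEdge e u v) (hf : ¬ e.headFst) (p : G.Walk v b) (hb : b ∈ T)
    (hp : p.connFrom S e.headSnd) : ∃ t ∈ T, G.Anterior u t := by
  induction p generalizing u e with
  | nil => exact ⟨_, hb, .single (he.antEdge hf)⟩
  | cons v v' w e' he' p ih =>
    obtain ⟨hiff, hp⟩ := hp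
    by_cases hv : v ∈ S
    · exact ⟨v, hST hv, .single (he.antEdge hf)⟩
    by_cases hf' : e'.headFst
    · have hns : ¬ e.headSnd := fun hs => hv (hiff.mp ⟨hs, hf'⟩)
      exact absurd (he'.hasHeadAt_fst hf')
        (hAG.not_hasHeadAt_of_undir (G.undir_symm _ _ (he.undir hf hns)))
    · obtain ⟨t, ht, hvt⟩ := ih he' hf' hb hp
      exact ⟨t, ht, .head (he.antEdge hf) hvt⟩

/-- On an `S`-connecting walk every non-collider is an anterior of a collider or of an
endpoint. -/
lemma exists_anterior_of_mem_nonCollidersFrom {S T : Set V} (hST : S ⊆ T) {c b : V}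
    (p : G.Walk c b) (hb : b ∈ T) {ph : Prop} (hp : p.connFrom S ph)
    (hc : ¬ ph → ∃ t ∈ T, G.Anterior c t) {x : V} (hx : x ∈ p.nonCollidersFrom ph) :
    ∃ t ∈ T, G.Anterior x t := by
  induction p generalizing ph with
  | nil => exact hx.elim
  | cons u v w e he p ih =>
    obtain ⟨hiff, hp⟩ := hp
    have hu : ¬ (ph ∧ e.headFst) → ∃ t ∈ T, G.Anterior u t := by
      intro hnc
      by_cases hph : ph
      · exact hAG.exists_anterior_of_tail hST he (fun hf => hnc ⟨hph, hf⟩) p hb hp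
      · exact hc hph
    rcases hx with ⟨rfl, hx⟩ | hx
    · exact hu hx
    · refine ih hb hp (fun hns => ?_) hx
      have hvu := he.antEdge_rev hns
      by_cases hcol : ph ∧ e.headFst
      · exact ⟨u, hST (hiff.mp hcol), .single hvu⟩
      · obtain ⟨t, ht, hut⟩ := hu hcol
        exact ⟨t, ht, .head hvu hut⟩

end IsAG

section Separation

variable {X Y Z : Set V} {v : V}

lemma MSep.disjoint {S : Set V} (h : G.MSep X Y S) : Disjoint X Y :=
  Set.disjoint_left.mpr fun x hx hy => h x hx x hy ⟨.nil x, trivial⟩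

lemma exists_connFrom_of_not_mSep (hXY : Disjoint X Y) {S : Set V} (h : ¬ G.MSep X Y S) :
    ∃ x ∈ X, ∃ y ∈ Y, ∃ (c : V) (e : EType) (_ : G.IsEdge e x c) (p : G.Walk c y),
      p.connFrom S e.headSnd := by
  simp only [MSep, MConn, not_forall, not_not] at h
  obtain ⟨x, hx, y, hy, π, hπ⟩ := h
  cases π with
  | nil => exact absurd hy (Set.disjoint_left.mp hXY hx)
  | cons _ c _ e he p => exact ⟨x, hx, y, hy, c, e, he, p, hπ⟩

lemma hasHeadAt_of_not_mSep_union_singleton (hZ : G.MSep X Y Z)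
    (h : ¬ G.MSep X Y (Z ∪ {v})) : G.HasHeadAt v := by
  obtain ⟨x, hx, y, hy, c, e, he, p, hp⟩ := exists_connFrom_of_not_mSep hZ.disjoint h
  exact (p.connFrom_union_singleton_elim hp).resolve_left
    fun hq => hZ x hx y hy ⟨.cons x c y e he p, hq⟩

/-- If `Z ∪ {v}` failed, `v` would be a collider of a connecting walk, hence carry an arrowhead,
so `v` is an ancestor of `X ∪ Y ∪ Z`; rerouting that walk along the directed path from `v` to
its first node `t'` in `X ∪ Y ∪ Z` gives a `Z`-connecting walk. -/
theorem IsAG.mSep_union_singleton_of_anterior (hAG : G.IsAG) (hZ : G.MSep X Y Z)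
    (hv : v ∉ Z) {t : V} (hvt : G.Anterior v t) (ht : t ∈ X ∪ Y ∪ Z) :
    G.MSep X Y (Z ∪ {v}) := by
  by_contra h
  have hanc := hAG.anc_of_anterior (hasHeadAt_of_not_mSep_union_singleton hZ h) hvt
  obtain ⟨t', ht', hchain⟩ := exists_dirAvoiding_of_anc hanc ht
  have hchainZ : Relation.ReflTransGen (G.dirAvoiding Z) v t' :=
    Relation.ReflTransGen.mono (fun _ _ hab => ⟨hab.1, fun ha => hab.2 (Or.inr ha)⟩) _ _ hchain
  obtain ⟨x, hx, y, hy, c, e, he, p, hp⟩ := exists_connFrom_of_not_mSep hZ.disjoint h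
  rcases ht' with (ht'X | ht'Y) | ht'Z
  · obtain ⟨r, hr⟩ := exists_walk_append_connBy_of_dirAvoiding hchainZ
    rcases exists_connFrom_or_reroute_start hv r hr p hp with ⟨q, hq⟩ | ⟨q, hq⟩
    · exact hZ x hx y hy ⟨.cons x c y e he q, hq⟩
    · exact hZ t' ht'X y hy ⟨q, hq⟩
  · obtain ⟨q₀, hq₀⟩ := exists_walk_connFrom_of_dirAvoiding hchainZ
    rcases exists_connFrom_or_reroute_end q₀ hq₀ p hp with ⟨q, hq⟩ | ⟨q, hq⟩
    · exact hZ x hx y hy ⟨.cons x c y e he q, hq⟩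
    · exact hZ x hx t' ht'Y ⟨.cons x c t' e he q, hq⟩
  · obtain ⟨d, hd, hdl⟩ := exists_cycle_connFrom_of_dirAvoiding hchainZ ht'Z hv
    obtain ⟨q, hq⟩ := exists_connFrom_splice_cycle hv d hd hdl p hp
    exact hZ x hx y hy ⟨.cons x c y e he q, hq⟩

theorem IsAG.exists_anterior_of_not_mSep_union_singleton (hAG : G.IsAG) {R : Set V}
    (hZR : G.MSep X Y (Z ∪ R)) (hvR : v ∈ R) (h : ¬ G.MSep X Y (Z ∪ {v})) :
    ∃ u ∈ R, u ∉ Z ∪ {v} ∧ ∃ t ∈ X ∪ Y ∪ Z ∪ {v}, G.Anterior u t := by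
  obtain ⟨x, hx, y, hy, c, e, he, p, hp⟩ := exists_connFrom_of_not_mSep hZR.disjoint h
  obtain ⟨u, hu, huR⟩ : ∃ u ∈ p.nonCollidersFrom e.headSnd, u ∈ R := by
    by_contra! hR
    have hq := p.connFrom_union hp hR
    rw [Set.union_assoc, Set.singleton_union, Set.insert_eq_of_mem hvR] at hq
    exact hZR x hx y hy ⟨.cons x c y e he p, hq⟩
  have hST : Z ∪ {v} ⊆ X ∪ Y ∪ Z ∪ {v} := by
    rw [Set.union_assoc _ Z]
    exact Set.subset_union_right
  refine ⟨u, huR, p.notMem_of_mem_nonCollidersFrom hp hu, ?_⟩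
  exact hAG.exists_anterior_of_mem_nonCollidersFrom hST p (Or.inl (Or.inl (Or.inr hy))) hp
    (fun hns => ⟨x, Or.inl (Or.inl (Or.inl hx)), .single (he.antEdge_rev hns)⟩) hu

end Separation

end MixedGraph

theorem statement_3_general (G : MixedGraph V) (hAG : G.IsAG)
    (X Y Z : Set V) (hZ : G.IsMSep X Y Z)
    (n : ℕ) (hn : 0 < n) (f : Fin n → V)
    (hfZ : ∀ i, f i ∉ Z) (hfXY : ∀ i, f i ∉ X ∪ Y)
    (hZf : G.IsMSep X Y (Z ∪ Set.range f)) :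
    ∃ i : Fin n, G.IsMSep X Y (Z ∪ {f i}) := by
  by_contra! hcon
  have hnotSep : ∀ i, ¬ G.MSep X Y (Z ∪ {f i}) := fun i h =>
    hcon i ⟨Set.disjoint_union_left.mpr ⟨hZ.1, Set.disjoint_singleton_left.mpr (hfXY i)⟩, h⟩
  have hhead : ∀ i, G.HasHeadAt (f i) := fun i =>
    hasHeadAt_of_not_mSep_union_singleton hZ.2 (hnotSep i)
  let StrictAnt : Fin n → Fin n → Prop := fun j i => f j ≠ f i ∧ G.Anterior (f j) (f i)
  have hpred : ∀ i, ∃ j, StrictAnt j i := by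
    intro i
    obtain ⟨_, ⟨j, rfl⟩, hj, t, ht, hjt⟩ :=
      hAG.exists_anterior_of_not_mSep_union_singleton hZf.2 ⟨i, rfl⟩ (hnotSep i)
    rcases ht with ht | rfl
    · exact (hnotSep j (hAG.mSep_union_singleton_of_anterior hZ.2 (hfZ j) hjt ht)).elim
    · exact ⟨j, fun h => hj (Or.inr h), hjt⟩
  have htrans : ∀ k j i, StrictAnt k j → StrictAnt j i → StrictAnt k i := by
    rintro k j i ⟨-, hkj⟩ ⟨hji, hji'⟩
    exact ⟨fun hki => hAG.not_anterior_of_anterior (hhead i) hji' hji (hki ▸ hkj),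
      hkj.trans hji'⟩
  have : Nonempty (Fin n) := ⟨⟨0, hn⟩⟩
  obtain ⟨i, hii, -⟩ := Finite.exists_rel_self_of_forall_exists_rel StrictAnt htrans hpred
  exact hii rfl

theorem statement_3 (G : MixedGraph V) (hAG : G.IsAG)
    (X Y Z : Set V) (hXY : Disjoint X Y) (hZ : G.IsMSep X Y Z)
    (n : ℕ) (hn : 0 < n) (f : Fin n → V) (hinj : Function.Injective f)
    (hfZ : ∀ i, f i ∉ Z) (hfXY : ∀ i, f i ∉ X ∪ Y)
    (hZf : G.IsMSep X Y (Z ∪ Set.range f)) :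
    ∃ i : Fin n, G.IsMSep X Y (Z ∪ {f i}) :=
  statement_3_general G hAG X Y Z hZ n hn f hfZ hfXY hZf
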